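/- arXiv:1508.01312 — 3 statements merged into one kernel-verified Lean document; each statement's English description precedes it below -/
import Mathlib

section
/- Let V : ℝ → ℝ be convex and let ω₀ < ω₁ < ... < ω_{2p} be an increasing finite sequence of real numbers of odd length 2p+1. Then V(∑_{k=0}^{2p} (−1)^k ω_k) ≤ ∑_{k=0}^{2p} (−1)^k V(ω_k). -/
/-! For `a ≤ b ≤ c` the points `b` and `a - b + c` are mirror images in `[a, c]`, so convexity
gives `f (a - b + c) + f b ≤ f a + f c`. Splitting off `ω₀ - ω₁`, the alternating sum is
`ω₀ - ω₁ + S` with `S` the alternating sum of `ω₂, …, ω_{2p}`, which lies in `[ω₂, ω_{2p}]`;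
this three-point inequality with `(a, b, c) = (ω₀, ω₁, S)` and induction on `p` conclude. -/

open Set

section Monotone

variable {α : Type*} [Preorder α] {p : ℕ} {ω : Fin (2 * (p + 1) + 1) → α}

theorem Monotone.comp_succ_succ (hω : Monotone ω) : Monotone (ω ∘ Fin.succ ∘ Fin.succ) :=
  hω.comp (Fin.strictMono_succ.comp Fin.strictMono_succ).monotone

theorem Monotone.apply_one_le_apply_two (hω : Monotone ω) : ω 1 ≤ ω 2 :=
  hω (Fin.le_def.2 (by simp only [Fin.val_one, Fin.val_two]; omega))

end Monotone

variable {𝕜 : Type*} [Field 𝕜] [LinearOrder 𝕜] [IsStrictOrderedRing 𝕜]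

theorem ConvexOn.map_sub_add_le {s : Set 𝕜} {f : 𝕜 → 𝕜} (hf : ConvexOn 𝕜 s f) {a b c : 𝕜}
    (ha : a ∈ s) (hc : c ∈ s) (hab : a ≤ b) (hbc : b ≤ c) :
    f (a - b + c) ≤ f a - f b + f c := by
  rcases (hab.trans hbc).eq_or_lt with rfl | hac
  · obtain rfl : b = a := hbc.antisymm hab
    simp
  set t := (c - b) / (c - a)
  have hca : c - a ≠ 0 := (sub_pos.2 hac).ne'
  have ht₀ : 0 ≤ t := div_nonneg (sub_nonneg.2 hbc) (sub_pos.2 hac).le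
  have ht₁ : 0 ≤ 1 - t := by
    rw [sub_nonneg, div_le_one (sub_pos.2 hac)]
    linarith
  have hb : t • a + (1 - t) • c = b := by
    simp only [t, smul_eq_mul]
    field_simp
    ring
  have hd : (1 - t) • a + t • c = a - b + c := by
    simp only [t, smul_eq_mul]
    field_simp
    ring
  have h₁ := hf.2 ha hc ht₀ ht₁ (add_sub_cancel t 1)
  have h₂ := hf.2 ha hc ht₁ ht₀ (sub_add_cancel 1 t)
  rw [hb] at h₁
  rw [hd] at h₂
  simp only [smul_eq_mul] at h₁ h₂
  linarith

theorem Fin.sum_neg_one_pow_mul_succ_succ {R : Type*} [CommRing R] {n : ℕ} (g : Fin (n + 2) → R) :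
    ∑ k : Fin (n + 2), (-1 : R) ^ (k : ℕ) * g k
      = g 0 - g 1 + ∑ k : Fin n, (-1 : R) ^ (k : ℕ) * g k.succ.succ := by
  simp only [Fin.sum_univ_succ, Fin.val_succ, pow_succ]
  simp only [Fin.coe_ofNat_eq_mod, Nat.zero_mod, pow_zero, one_mul, mul_neg, mul_one,
    Fin.succ_zero_eq_one, neg_mul, neg_neg]
  ring

/-- `Fin (2 * (p + 1) + 1)` and `Fin (2 * p + 1 + 2)` are only definitionally equal, which `rw`
does not see through. -/
theorem Fin.sum_neg_one_pow_mul_two_mul_succ_add_one {R : Type*} [CommRing R] {p : ℕ}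
    (g : Fin (2 * (p + 1) + 1) → R) :
    ∑ k : Fin (2 * (p + 1) + 1), (-1 : R) ^ (k : ℕ) * g k
      = g 0 - g 1 + ∑ k : Fin (2 * p + 1), (-1 : R) ^ (k : ℕ) * g k.succ.succ :=
  Fin.sum_neg_one_pow_mul_succ_succ (n := 2 * p + 1) g

theorem Monotone.sum_neg_one_pow_mul_mem_Icc {p : ℕ} {ω : Fin (2 * p + 1) → 𝕜}
    (hω : Monotone ω) :
    ∑ k : Fin (2 * p + 1), (-1 : 𝕜) ^ (k : ℕ) * ω k ∈ Icc (ω 0) (ω (Fin.last (2 * p))) := by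
  induction p with
  | zero => simp
  | succ p ih =>
    obtain ⟨hS₂, hSlast⟩ := ih hω.comp_succ_succ
    simp only [Function.comp_apply, Fin.succ_zero_eq_one, Fin.succ_one_eq_two,
      Fin.succ_last] at hS₂ hSlast
    have h₀₁ : ω 0 ≤ ω 1 := hω (Fin.zero_le _)
    have h₁₂ := hω.apply_one_le_apply_two
    rw [Fin.sum_neg_one_pow_mul_two_mul_succ_add_one]
    constructor
    · linarith
    · exact (by linarith : _ ≤ _).trans hSlast

theorem ConvexOn.map_sum_neg_one_pow_mul_le {s : Set 𝕜} {f : 𝕜 → 𝕜} (hf : ConvexOn 𝕜 s f)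
    {p : ℕ} {ω : Fin (2 * p + 1) → 𝕜} (hω : Monotone ω) (hωs : ∀ k, ω k ∈ s) :
    f (∑ k : Fin (2 * p + 1), (-1 : 𝕜) ^ (k : ℕ) * ω k) ≤
      ∑ k : Fin (2 * p + 1), (-1 : 𝕜) ^ (k : ℕ) * f (ω k) := by
  induction p with
  | zero => simp
  | succ p ih =>
    have hS := hω.comp_succ_succ.sum_neg_one_pow_mul_mem_Icc
    simp only [Function.comp_apply, Fin.succ_zero_eq_one, Fin.succ_one_eq_two,
      Fin.succ_last] at hS
    have hSs := hf.1.ordConnected.out (hωs _) (hωs _) hS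
    have h₀₁ : ω 0 ≤ ω 1 := hω (Fin.zero_le _)
    rw [Fin.sum_neg_one_pow_mul_two_mul_succ_add_one, Fin.sum_neg_one_pow_mul_two_mul_succ_add_one]
    calc _ ≤ f (ω 0) - f (ω 1) + f (∑ k : Fin (2 * p + 1), (-1 : 𝕜) ^ (k : ℕ) * ω k.succ.succ) :=
          hf.map_sub_add_le (hωs 0) hSs h₀₁ (hω.apply_one_le_apply_two.trans hS.1)
      _ ≤ _ := by
          gcongr
          exact ih hω.comp_succ_succ fun k ↦ hωs _

/-- if `V : ℝ → ℝ` is convex and `ω₀ < ω₁ < ⋯ < ω_{2p}` is an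
increasing sequence of odd length `2p+1`, then
`V(∑ (−1)^k ω_k) ≤ ∑ (−1)^k V(ω_k)`. -/
theorem convex_alternating_sum (V : ℝ → ℝ) (hV : ConvexOn ℝ Set.univ V)
    (p : ℕ) (ω : Fin (2 * p + 1) → ℝ) (hω : StrictMono ω) :
    V (∑ k : Fin (2 * p + 1), (-1 : ℝ) ^ (k : ℕ) * ω k) ≤
      ∑ k : Fin (2 * p + 1), (-1 : ℝ) ^ (k : ℕ) * V (ω k) :=
  hV.map_sum_neg_one_pow_mul_le hω.monotone fun _ ↦ Set.mem_univ _
end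

section
/- (Crandall–Tartar) Let (X, μ) be a measure space and T : L¹(X) → L¹(X) a map that preserves integrals (∫ Tu dμ = ∫ u dμ for all u) and is order preserving (u ≤ v a.e. implies Tu ≤ Tv a.e.). Then T is non-expansive in the L¹ norm: ‖Tu − Tv‖_{L¹} ≤ ‖u − v‖_{L¹}. -/
open MeasureTheory

/-- Crandall–Tartar: if `T` maps `L¹(X,μ)` to itself, preserves
integrals, and is order preserving (w.r.t. the pointwise a.e. order), then `T`
is non-expansive in the `L¹` norm. -/
theorem crandall_tartar {X : Type*} [MeasurableSpace X] (μ : Measure X)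
    (T : (X → ℝ) → (X → ℝ))
    (hTint : ∀ w : X → ℝ, Integrable w μ → Integrable (T w) μ)
    (hpres : ∀ w : X → ℝ, Integrable w μ → ∫ x, T w x ∂μ = ∫ x, w x ∂μ)
    (hmono : ∀ w₁ w₂ : X → ℝ, Integrable w₁ μ → Integrable w₂ μ →
      w₁ ≤ᵐ[μ] w₂ → T w₁ ≤ᵐ[μ] T w₂)
    (u v : X → ℝ) (hu : Integrable u μ) (hv : Integrable v μ) :
    ∫ x, |T u x - T v x| ∂μ ≤ ∫ x, |u x - v x| ∂μ := by
  set w : X → ℝ := fun x => max (u x) (v x) with hw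
  have hwi : Integrable w μ := hu.sup hv
  have hTu := hTint u hu
  have hTv := hTint v hv
  have hTw := hTint w hwi
  have h1 : T u ≤ᵐ[μ] T w := hmono u w hu hwi
    (Filter.Eventually.of_forall fun x => le_max_left _ _)
  have h2 : T v ≤ᵐ[μ] T w := hmono v w hv hwi
    (Filter.Eventually.of_forall fun x => le_max_right _ _)
  have key : ∫ x, |T u x - T v x| ∂μ ≤ ∫ x, (2 * T w x - T u x - T v x) ∂μ := by
    apply integral_mono_ae (hTu.sub hTv).abs
      (((hTw.const_mul 2).sub hTu).sub hTv)
    filter_upwards [h1, h2] with x h1x h2x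
    simp only [Pi.sub_apply]
    rw [abs_sub_le_iff]
    constructor <;> linarith
  have hi1 : Integrable (fun x => 2 * T w x - T u x) μ := (hTw.const_mul 2).sub hTu
  have hi2 : Integrable (fun x => 2 * T w x) μ := hTw.const_mul 2
  have hi3 : Integrable (fun x => 2 * w x - u x) μ := (hwi.const_mul 2).sub hu
  have hi4 : Integrable (fun x => 2 * w x) μ := hwi.const_mul 2
  have hrhs : ∫ x, (2 * T w x - T u x - T v x) ∂μ = ∫ x, |u x - v x| ∂μ := by
    rw [integral_sub hi1 hTv, integral_sub hi2 hTu,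
      integral_const_mul, hpres u hu, hpres v hv, hpres w hwi]
    rw [show (∫ x, |u x - v x| ∂μ) = ∫ x, (2 * w x - u x - v x) ∂μ from
      integral_congr_ae (Filter.Eventually.of_forall fun x => by
        simp only [hw]
        rcases le_total (u x) (v x) with h | h
        · rw [abs_of_nonpos (by linarith), max_eq_right h]; ring
        · rw [abs_of_nonneg (by linarith), max_eq_left h]; ring)]
    rw [integral_sub hi3 hv, integral_sub hi4 hu, integral_const_mul]
  linarith
end

section
/- The homogeneous transport-collapse operator T(t) is non-expansive on L¹(ℝᵈ): for all u, v ∈ L¹(ℝᵈ), ‖T(t)u − T(t)v‖_{L¹(ℝᵈ)} ≤ ‖u − v‖_{L¹(ℝᵈ)}. -/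
/-!
Since `χ(λ, ·)` is monotone and `∫ χ(λ, a) dλ = a`, the kinetic functions satisfy
`∫ |χ(λ, a) - χ(λ, b)| dλ = |a - b|`. Bounding `|T(t)u - T(t)v|(x)` by
`∫ |χ(λ, u(x - t f'(λ))) - χ(λ, v(x - t f'(λ)))| dλ`, integrating in `x`, exchanging the two
integrals and undoing the translation by `t f'(λ)` for each fixed `λ` leaves exactly
`∫ |u - v|`.
-/

open MeasureTheory

noncomputable def chi (l u : ℝ) : ℝ :=
  if 0 < l ∧ l < u then 1 else if u < l ∧ l < 0 then -1 else 0

open Set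

theorem chi_eq_indicator_sub_indicator (l a : ℝ) :
    chi l a = (Ioo 0 a).indicator 1 l - (Ioo a 0).indicator 1 l := by
  by_cases h₁ : 0 < l ∧ l < a
  · have h₂ : ¬(a < l ∧ l < 0) := fun h₂ => by linarith [h₁.1, h₂.2]
    simp [chi, indicator, h₁, h₂]
  · by_cases h₂ : a < l ∧ l < 0 <;> simp [chi, indicator, h₁, h₂]

theorem measurable_uncurry_chi : Measurable (Function.uncurry chi) := by
  unfold Function.uncurry chi
  refine Measurable.ite ?_ measurable_const (Measurable.ite ?_ measurable_const measurable_const)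
  · exact (measurableSet_lt measurable_const measurable_fst).inter
      (measurableSet_lt measurable_fst measurable_snd)
  · exact (measurableSet_lt measurable_snd measurable_fst).inter
      (measurableSet_lt measurable_fst measurable_const)

theorem chi_zero_right (l : ℝ) : chi l 0 = 0 := by
  simp [chi_eq_indicator_sub_indicator]

theorem chi_mono (l : ℝ) : Monotone (chi l) := fun a b hab => by
  simp only [chi_eq_indicator_sub_indicator]
  gcongr ?_ - ?_
  · exact indicator_le_indicator_of_subset (Ioo_subset_Ioo_right hab) (fun _ => zero_le_one) l
  · exact indicator_le_indicator_of_subset (Ioo_subset_Ioo_left hab) (fun _ => zero_le_one) l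

theorem integrable_indicator_Ioo_one (a b : ℝ) : Integrable ((Ioo a b).indicator (1 : ℝ → ℝ)) :=
  (integrableOn_const measure_Ioo_lt_top.ne).integrable_indicator measurableSet_Ioo

theorem integrable_chi (a : ℝ) : Integrable (fun l => chi l a) := by
  simp only [chi_eq_indicator_sub_indicator]
  exact (integrable_indicator_Ioo_one 0 a).sub (integrable_indicator_Ioo_one a 0)

theorem integral_chi (a : ℝ) : ∫ l, chi l a = a := by
  simp only [chi_eq_indicator_sub_indicator]
  rw [integral_sub (integrable_indicator_Ioo_one 0 a) (integrable_indicator_Ioo_one a 0),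
    integral_indicator_one measurableSet_Ioo, integral_indicator_one measurableSet_Ioo,
    Real.volume_real_Ioo, Real.volume_real_Ioo, sub_zero, zero_sub]
  exact max_zero_sub_max_neg_zero_eq_self a

theorem lintegral_enorm_chi_sub (a b : ℝ) : ∫⁻ l, ‖chi l a - chi l b‖ₑ = ‖a - b‖ₑ := by
  wlog hab : a ≤ b generalizing a b
  · simpa only [enorm_sub_rev] using this b a (le_of_not_ge hab)
  have hnonneg (l : ℝ) : 0 ≤ chi l b - chi l a := sub_nonneg.2 (chi_mono l hab)
  calc ∫⁻ l, ‖chi l a - chi l b‖ₑ = ∫⁻ l, ENNReal.ofReal (chi l b - chi l a) := by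
        refine lintegral_congr fun l => ?_
        rw [enorm_sub_rev, Real.enorm_of_nonneg (hnonneg l)]
    _ = ENNReal.ofReal (∫ l, (chi l b - chi l a)) :=
        (ofReal_integral_eq_lintegral_ofReal ((integrable_chi b).sub (integrable_chi a))
          (Filter.Eventually.of_forall hnonneg)).symm
    _ = ‖a - b‖ₑ := by
        rw [integral_sub (integrable_chi b) (integrable_chi a), integral_chi, integral_chi,
          enorm_sub_rev, Real.enorm_of_nonneg (sub_nonneg.2 hab)]

section Transport

variable {E : Type*} [MeasurableSpace E] [AddGroup E] [MeasurableAdd₂ E] [MeasurableNeg E]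
  {μ : Measure E} [SFinite μ] [μ.IsAddRightInvariant] {s : ℝ → E}

noncomputable def transportCollapse (s : ℝ → E) (u : E → ℝ) (x : E) : ℝ :=
  ∫ l, chi l (u (x - s l))

theorem quasiMeasurePreserving_sub_shift (hs : Measurable s) :
    Measure.QuasiMeasurePreserving (fun p : E × ℝ => p.1 - s p.2) (μ.prod volume) μ := by
  have hmeas : Measurable (fun p : E × ℝ => p.1 - s p.2) :=
    measurable_fst.sub (hs.comp measurable_snd)
  refine ⟨hmeas, Measure.AbsolutelyContinuous.mk fun N hN hN0 => ?_⟩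
  rw [Measure.map_apply hmeas hN, Measure.prod_apply_symm (hmeas hN)]
  have hslice (l : ℝ) : (fun x => (x, l)) ⁻¹' ((fun p : E × ℝ => p.1 - s p.2) ⁻¹' N)
      = (· + -s l) ⁻¹' N := by
    ext x; simp [sub_eq_add_neg]
  simp [hslice, measure_preimage_add_right, hN0]

theorem lintegral_lintegral_enorm_chi_sub_shift (hs : Measurable s) {u v : E → ℝ}
    (hu : AEMeasurable u μ) (hv : AEMeasurable v μ) :
    ∫⁻ x, (∫⁻ l, ‖chi l (u (x - s l)) - chi l (v (x - s l))‖ₑ) ∂μ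
      = ∫⁻ x, ‖u x - v x‖ₑ ∂μ := by
  have hφ : Measurable fun p : ℝ × ℝ × ℝ => ‖chi p.1 p.2.1 - chi p.1 p.2.2‖ₑ :=
    ((measurable_uncurry_chi.comp (measurable_fst.prodMk measurable_snd.fst)).sub
      (measurable_uncurry_chi.comp (measurable_fst.prodMk measurable_snd.snd))).enorm
  have hqmp := quasiMeasurePreserving_sub_shift (μ := μ) hs
  have hshifted : AEMeasurable
      (fun p : E × ℝ => ‖chi p.2 (u (p.1 - s p.2)) - chi p.2 (v (p.1 - s p.2))‖ₑ)
      (μ.prod volume) :=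
    -- `(· :)` elaborates the composition before unifying with the stated function; the other
    -- order times out.
    (hφ.comp_aemeasurable (measurable_snd.aemeasurable.prodMk
      ((hu.comp_quasiMeasurePreserving hqmp).prodMk (hv.comp_quasiMeasurePreserving hqmp))) :)
  have hunshifted : AEMeasurable
      (fun p : ℝ × E => ‖chi p.1 (u p.2) - chi p.1 (v p.2)‖ₑ) (volume.prod μ) :=
    (hφ.comp_aemeasurable (measurable_fst.aemeasurable.prodMk (hu.comp_snd.prodMk hv.comp_snd)) :)
  calc ∫⁻ x, (∫⁻ l, ‖chi l (u (x - s l)) - chi l (v (x - s l))‖ₑ) ∂μ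
      = ∫⁻ l : ℝ, ∫⁻ x, ‖chi l (u (x - s l)) - chi l (v (x - s l))‖ₑ ∂μ :=
        lintegral_lintegral_swap hshifted
    _ = ∫⁻ l : ℝ, ∫⁻ x, ‖chi l (u x) - chi l (v x)‖ₑ ∂μ :=
        lintegral_congr fun l =>
          lintegral_sub_right_eq_self (fun x => ‖chi l (u x) - chi l (v x)‖ₑ) (s l)
    _ = ∫⁻ x, (∫⁻ l, ‖chi l (u x) - chi l (v x)‖ₑ) ∂μ := lintegral_lintegral_swap hunshifted
    _ = ∫⁻ x, ‖u x - v x‖ₑ ∂μ := by simp_rw [lintegral_enorm_chi_sub]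

theorem integrable_chi_comp_sub_shift (hs : Measurable s) {u : E → ℝ} (hu : Integrable u μ) :
    Integrable (fun p : E × ℝ => chi p.2 (u (p.1 - s p.2))) (μ.prod volume) := by
  have hmeas : AEMeasurable (fun p : E × ℝ => chi p.2 (u (p.1 - s p.2))) (μ.prod volume) :=
    (measurable_uncurry_chi.comp_aemeasurable (measurable_snd.aemeasurable.prodMk
      (hu.aemeasurable.comp_quasiMeasurePreserving (quasiMeasurePreserving_sub_shift hs))) :)
  refine ⟨hmeas.aestronglyMeasurable, ?_⟩
  have hL :=
    lintegral_lintegral_enorm_chi_sub_shift hs hu.aemeasurable (aemeasurable_const (b := 0))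
  simp only [chi_zero_right, sub_zero] at hL
  rw [hasFiniteIntegral_iff_enorm, lintegral_prod _ hmeas.enorm, hL]
  exact hu.hasFiniteIntegral

theorem integral_abs_transportCollapse_sub_le (hs : Measurable s) {u v : E → ℝ}
    (hu : Integrable u μ) (hv : Integrable v μ) :
    ∫ x, |transportCollapse s u x - transportCollapse s v x| ∂μ ≤ ∫ x, |u x - v x| ∂μ := by
  have hFu := integrable_chi_comp_sub_shift hs hu
  have hFv := integrable_chi_comp_sub_shift hs hv
  have hpointwise : ∀ᵐ x ∂μ, ‖transportCollapse s u x - transportCollapse s v x‖ₑ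
      ≤ ∫⁻ l, ‖chi l (u (x - s l)) - chi l (v (x - s l))‖ₑ := by
    filter_upwards [hFu.prod_right_ae, hFv.prod_right_ae] with x hux hvx
    rw [transportCollapse, transportCollapse, ← integral_sub hux hvx]
    exact enorm_integral_le_lintegral_enorm _
  have hTmeas : AEStronglyMeasurable
      (fun x => transportCollapse s u x - transportCollapse s v x) μ :=
    hFu.aestronglyMeasurable.integral_prod_right'.sub hFv.aestronglyMeasurable.integral_prod_right'
  have hdiff : Integrable (fun x => u x - v x) μ := hu.sub hv
  simp_rw [← Real.norm_eq_abs]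
  rw [integral_norm_eq_lintegral_enorm hTmeas,
    integral_norm_eq_lintegral_enorm hdiff.aestronglyMeasurable]
  refine ENNReal.toReal_mono hdiff.hasFiniteIntegral.ne ?_
  calc ∫⁻ x, ‖transportCollapse s u x - transportCollapse s v x‖ₑ ∂μ
      ≤ ∫⁻ x, (∫⁻ l, ‖chi l (u (x - s l)) - chi l (v (x - s l))‖ₑ) ∂μ :=
        lintegral_mono_ae hpointwise
    _ = ∫⁻ x, ‖u x - v x‖ₑ ∂μ :=
        lintegral_lintegral_enorm_chi_sub_shift hs hu.aemeasurable hv.aemeasurable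

end Transport

theorem transport_collapse_nonexpansive_general {d : ℕ}
    (f' : ℝ → EuclideanSpace ℝ (Fin d))
    (hf' : Continuous f') (t : ℝ)
    (u v : EuclideanSpace ℝ (Fin d) → ℝ) (hu : Integrable u) (hv : Integrable v) :
    ∫ x : EuclideanSpace ℝ (Fin d),
        |(∫ l : ℝ, chi l (u (x - t • f' l))) - ∫ l : ℝ, chi l (v (x - t • f' l))|
      ≤ ∫ x : EuclideanSpace ℝ (Fin d), |u x - v x| :=
  integral_abs_transportCollapse_sub_le (hf'.measurable.const_smul t) hu hv

/-- the homogeneous transport-collapse operator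
`T(t)u(x) = ∫_ℝ χ(λ, u(x − f'(λ)t)) dλ` is non-expansive on `L¹(ℝᵈ)`:
`‖T(t)u − T(t)v‖_{L¹} ≤ ‖u − v‖_{L¹}`. -/
theorem transport_collapse_nonexpansive {d : ℕ}
    (f f' : ℝ → EuclideanSpace ℝ (Fin d)) (hf : ∀ l : ℝ, HasDerivAt f (f' l) l)
    (hf' : Continuous f') (t : ℝ) (ht : 0 ≤ t)
    (u v : EuclideanSpace ℝ (Fin d) → ℝ) (hu : Integrable u) (hv : Integrable v) :
    ∫ x : EuclideanSpace ℝ (Fin d),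
        |(∫ l : ℝ, chi l (u (x - t • f' l))) - ∫ l : ℝ, chi l (v (x - t • f' l))|
      ≤ ∫ x : EuclideanSpace ℝ (Fin d), |u x - v x| :=
  transport_collapse_nonexpansive_general f' hf' t u v hu hv
end
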